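/- Let m and k be odd positive integers with k < m and gcd(k, m) = 1. Let e = 2^{m-1} - 2^{k-1} - 1, let L(z) = Σ_{i=0}^{k-1} z^{2^i}, and define the Dempwolff–Müller multiplication on F_{2^m} by a ⋄ x = a^e · L(a·x). Let d be a positive integer with d·(2^k - 1) ≡ 1 (mod 2^{2m} - 1). Then for every x ∈ F_{2^m} with x ≠ 0, the map a ↦ a ⋄ x is a bijection of F_{2^m}, and for every y ∈ F_{2^m} its unique preimage is a = (x · D_d(y^2 · (x^{2^k + 1})^{-1}))^{-1}; that is, ((x · D_d(y^2 · (x^{2^k+1})^{-1}))^{-1}) ⋄ x = y for all y ∈ F_{2^m}, and (x · D_d((a ⋄ x)^2 · (x^{2^k+1})^{-1}))^{-1} = a for all a ∈ F_{2^m}. -/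

import Mathlib

/-!
Put `t = a x`. The exponent `e = 2^(m-1) - 2^(k-1) - 1` satisfies `2e + 2^k + 1 = 2^m - 1`, so
`(a ⋄ x)^2 / x^(2^k+1) = L(t)^2 / t^(2^k+1)`, and it suffices to show
`D_d(L(t)^2 / t^(2^k+1)) = t⁻¹`. Choose `s` in the algebraic closure with `s + s⁻¹ = t⁻¹`; the
two roots of `X^2 + t⁻¹ X + 1` are `s` and `s⁻¹`, so Frobenius gives `s^(2^(2m)) = s`. With
`u = (s + 1)⁻¹` we have `t = u + u^2`, so `L(t) = u^(2^k) + u` telescopes, and a direct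
computation gives `L(t)^2 / t^(2^k+1) = v + v⁻¹` for `v = s^(2^k-1)`. Then
`D_d(v + v⁻¹) = v^d + v^(-d) = s + s⁻¹ = t⁻¹`, because `v^d = s` by the choice of `d`.
In characteristic 2 the explicit coefficient formula for `D_d` satisfies the recurrence
`D_(n+2) = x D_(n+1) + D_n`, so it agrees with Mathlib's `dickson 1 1`.
-/

instance : Fact (Nat.Prime 2) := ⟨Nat.prime_two⟩

/-- The Dickson polynomial of the first kind with parameter 1, evaluated at `x`:
`D_d(x) = Σ_{i=0}^{⌊d/2⌋} (d/(d-i))·binom(d-i, i)·x^(d-2i)`, with the integer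
coefficients cast into the field (hence reduced modulo 2). -/
noncomputable def dicksonEval {m : ℕ} (d : ℕ) (x : GaloisField 2 m) : GaloisField 2 m :=
  ∑ i ∈ Finset.range (d / 2 + 1),
    ((d * Nat.choose (d - i) i / (d - i) : ℕ) : GaloisField 2 m) * x ^ (d - 2 * i)

open Finset Polynomial

def dicksonCoeff (n i : ℕ) : ℕ := n * (n - i).choose i / (n - i)

lemma dicksonCoeff_eq_zero_of_lt {n i : ℕ} (h : n < 2 * i) : dicksonCoeff n i = 0 := by
  simp [dicksonCoeff, Nat.choose_eq_zero_of_lt (by omega : n - i < i)]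

lemma dicksonCoeff_zero_right {n : ℕ} (hn : n ≠ 0) : dicksonCoeff n 0 = 1 := by
  simp [dicksonCoeff, Nat.div_self (Nat.pos_of_ne_zero hn)]

lemma dicksonCoeff_succ_eq_choose_add_choose {n i l : ℕ} (h : n = i + l + 2) :
    dicksonCoeff n (i + 1) = (l + 1).choose (i + 1) + l.choose i := by
  have hsub : n - (i + 1) = l + 1 := by omega
  have hmul : n * (l + 1).choose (i + 1) = (l + 1) * ((l + 1).choose (i + 1) + l.choose i) := by
    rw [mul_add, Nat.add_one_mul_choose_eq, h]
    ring
  rw [dicksonCoeff, hsub, hmul, Nat.mul_div_cancel_left _ l.succ_pos]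

lemma dicksonCoeff_add_two_of_lt {n i : ℕ} (h : i < n) :
    dicksonCoeff (n + 2) (i + 1) = dicksonCoeff (n + 1) (i + 1) + dicksonCoeff n i := by
  cases i with
  | zero =>
    obtain ⟨l, rfl⟩ : ∃ l, n = l + 1 := ⟨n - 1, by omega⟩
    rw [dicksonCoeff_succ_eq_choose_add_choose (l := l + 1) (by omega),
      dicksonCoeff_succ_eq_choose_add_choose (l := l) (by omega),
      dicksonCoeff_zero_right (by omega)]
    simp
  | succ j =>
    obtain ⟨l, rfl⟩ : ∃ l, n = j + l + 2 := ⟨n - j - 2, by omega⟩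
    rw [dicksonCoeff_succ_eq_choose_add_choose (l := l + 1) (by omega),
      dicksonCoeff_succ_eq_choose_add_choose (l := l) (by omega),
      dicksonCoeff_succ_eq_choose_add_choose (l := l) (by omega),
      Nat.choose_succ_succ' (l + 1), Nat.choose_succ_succ' l j]
    ring

lemma dicksonCoeff_add_two {R : Type*} [AddMonoidWithOne R] [CharP R 2] (n i : ℕ) :
    (dicksonCoeff (n + 2) (i + 1) : R) = dicksonCoeff (n + 1) (i + 1) + dicksonCoeff n i := by
  rcases lt_or_ge i n with h | h
  · rw [dicksonCoeff_add_two_of_lt h, Nat.cast_add]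
  obtain rfl | hi := eq_or_ne i 0
  · obtain rfl : n = 0 := by omega
    simp [dicksonCoeff, CharTwo.two_eq_zero]
  · simp [dicksonCoeff_eq_zero_of_lt (by omega : n + 2 < 2 * (i + 1)),
      dicksonCoeff_eq_zero_of_lt (by omega : n + 1 < 2 * (i + 1)),
      dicksonCoeff_eq_zero_of_lt (by omega : n < 2 * i)]

section

variable {R : Type*}

def dicksonSum [Semiring R] (n : ℕ) (x : R) : R :=
  ∑ i ∈ range (n / 2 + 1), (dicksonCoeff n i : R) * x ^ (n - 2 * i)

lemma dicksonSum_eq_sum_range [Semiring R] (x : R) {n M : ℕ} (h : n / 2 + 1 ≤ M) :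
    dicksonSum n x = ∑ i ∈ range M, (dicksonCoeff n i : R) * x ^ (n - 2 * i) := by
  refine sum_subset (range_subset_range.2 h) fun i _ hi => ?_
  rw [dicksonCoeff_eq_zero_of_lt (by simp at hi; omega), Nat.cast_zero, zero_mul]

lemma dicksonSum_add_two [CommRing R] [CharP R 2] (n : ℕ) (x : R) :
    dicksonSum (n + 2) x = x * dicksonSum (n + 1) x + dicksonSum n x := by
  rw [dicksonSum_eq_sum_range x (M := n + 3) (by omega),
    dicksonSum_eq_sum_range x (M := n + 3) (by omega),
    dicksonSum_eq_sum_range x (M := n + 2) (by omega),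
    sum_range_succ' (fun i => (dicksonCoeff (n + 2) i : R) * x ^ (n + 2 - 2 * i)),
    sum_range_succ' (fun i => (dicksonCoeff (n + 1) i : R) * x ^ (n + 1 - 2 * i)),
    mul_add, mul_sum, add_right_comm, ← sum_add_distrib]
  congr 1
  · refine sum_congr rfl fun i _ => ?_
    rw [dicksonCoeff_add_two, show n + 2 - 2 * (i + 1) = n - 2 * i by omega]
    rcases le_or_gt (2 * i + 1) n with h | h
    · rw [show n - 2 * i = n + 1 - 2 * (i + 1) + 1 by omega, pow_succ']
      ring
    · rw [dicksonCoeff_eq_zero_of_lt (by omega : n + 1 < 2 * (i + 1))]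
      simp
  · simp [dicksonCoeff_zero_right, pow_succ']

theorem dicksonSum_eq_eval_dickson [CommRing R] [CharP R 2] (n : ℕ) (x : R) :
    dicksonSum n x = (dickson 1 (1 : R) n).eval x := by
  induction n using Nat.twoStepInduction with
  | zero =>
    simp [dicksonSum, dicksonCoeff]
    rw [show (3 : R) - 1 = 2 by norm_num, CharTwo.two_eq_zero]
  | one => simp [dicksonSum, dicksonCoeff]
  | more n ih₀ ih₁ =>
    rw [dicksonSum_add_two, ih₀, ih₁, dickson_add_two]
    simp [CharTwo.sub_eq_add]

end

lemma dickson_one_one_eval_zero {R : Type*} [CommRing R] [CharP R 2] (n : ℕ) :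
    (dickson 1 (1 : R) n).eval 0 = 0 := by
  simpa [CharTwo.add_self_eq_zero] using dickson_one_one_eval_add_inv (1 : R) 1 (one_mul 1) n

lemma exists_add_inv_eq {L : Type*} [Field L] [IsAlgClosed L] (c : L) :
    ∃ s : L, s ≠ 0 ∧ s + s⁻¹ = c := by
  obtain ⟨s, hs⟩ := IsAlgClosed.exists_root (C 1 * X ^ 2 + C (-c) * X + C 1)
    (by rw [degree_quadratic one_ne_zero]; decide)
  have hs : s ^ 2 - c * s + 1 = 0 := by simpa [sub_eq_add_neg] using hs
  have hs0 : s ≠ 0 := by rintro rfl; simp at hs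
  refine ⟨s, hs0, ?_⟩
  field_simp
  linear_combination hs

lemma eq_or_eq_inv_of_add_inv_eq {L : Type*} [Field L] {a b : L} (ha : a ≠ 0) (hb : b ≠ 0)
    (h : a + a⁻¹ = b + b⁻¹) : a = b ∨ a = b⁻¹ := by
  have : (a - b) * (a * b - 1) = 0 := by
    field_simp at h
    linear_combination h
  rcases mul_eq_zero.mp this with h | h
  · exact Or.inl (sub_eq_zero.mp h)
  · exact Or.inr (eq_inv_of_mul_eq_one_left (sub_eq_zero.mp h))

lemma pow_card_sq_eq_self {K L : Type*} [Field K] [Fintype K] [Field L] [Algebra K L] (c : K)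
    {s : L} (hs : s ≠ 0) (hc : s + s⁻¹ = algebraMap K L c) : s ^ (Fintype.card K ^ 2) = s := by
  set q := Fintype.card K
  have root : ∀ a : L, a ≠ 0 →
      (aeval a (X ^ 2 - C c * X + 1) = 0 ↔ a + a⁻¹ = algebraMap K L c) := by
    intro a ha
    simp only [map_add, map_sub, map_mul, map_pow, aeval_X, aeval_C, map_one]
    constructor <;> intro h <;> field_simp at h ⊢ <;> linear_combination h
  have hq : s ^ q + (s ^ q)⁻¹ = algebraMap K L c := by
    rw [← root _ (pow_ne_zero _ hs), ← expand_aeval, FiniteField.expand_card, map_pow,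
      (root s hs).mpr hc, zero_pow Fintype.card_ne_zero]
  rw [sq, pow_mul]
  rcases eq_or_eq_inv_of_add_inv_eq (pow_ne_zero _ hs) hs (hq.trans hc.symm) with h | h
  · rw [h, h]
  · rw [h, inv_pow, h, inv_inv]

lemma sum_range_add_sq_pow_two_pow {R : Type*} [CommRing R] [CharP R 2] (u : R) (k : ℕ) :
    ∑ i ∈ range k, (u + u ^ 2) ^ 2 ^ i = u ^ 2 ^ k + u := by
  have hterm : ∀ i, (u + u ^ 2) ^ 2 ^ i = u ^ 2 ^ (i + 1) - u ^ 2 ^ i := fun i => by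
    rw [add_pow_char_pow, ← pow_mul, ← pow_succ', CharTwo.sub_eq_add, add_comm]
  rw [sum_congr rfl fun i _ => hterm i, sum_range_sub (fun i => u ^ 2 ^ i), pow_zero, pow_one,
    CharTwo.sub_eq_add]

lemma sum_pow_two_pow_sq_mul_inv_eq_add_inv {L : Type*} [Field L] [CharP L 2] {s t : L}
    (ht : t * (s + s⁻¹) = 1) (k : ℕ) :
    (∑ i ∈ range k, t ^ 2 ^ i) ^ 2 * (t ^ (2 ^ k + 1))⁻¹ =
      s ^ (2 ^ k - 1) + (s ^ (2 ^ k - 1))⁻¹ := by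
  have two : (2 : L) = 0 := CharTwo.two_eq_zero
  have hs : s ≠ 0 := by rintro rfl; simp at ht
  have hs1 : s + 1 ≠ 0 := by
    intro h
    rw [show s = 1 by linear_combination h - two] at ht
    simp [CharTwo.add_self_eq_zero] at ht
  have htu : t = (s + 1)⁻¹ + (s + 1)⁻¹ ^ 2 := by
    have : t * (s + 1) ^ 2 = s := by
      field_simp at ht
      linear_combination ht + t * s * two
    field_simp
    linear_combination this - two
  have hP1 : s ^ 2 ^ k + 1 = (s + 1) ^ 2 ^ k := by rw [add_pow_char_pow, one_pow]
  have hP0 : s ^ 2 ^ k ≠ 0 := pow_ne_zero _ hs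
  have hP10 : s ^ 2 ^ k + 1 ≠ 0 := hP1 ▸ pow_ne_zero _ hs1
  have hsq : ∀ y : L, y + 1 ≠ 0 → (y + 1)⁻¹ + (y + 1)⁻¹ ^ 2 = y / (y + 1) ^ 2 := fun y hy => by
    field_simp
    linear_combination two
  rw [htu, sum_range_add_sq_pow_two_pow, pow_succ _ (2 ^ k), add_pow_char_pow, ← pow_mul,
    mul_comm 2, pow_mul, inv_pow, ← hP1, hsq s hs1, hsq _ hP10, pow_sub₀ s hs Nat.one_le_two_pow,
    pow_one]
  field_simp
  linear_combination (s ^ 2 ^ k * s + 2 * s + 2 * s ^ 2 ^ k + 2) * two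

section DempwolffMuller

variable {K : Type*} [Field K]

theorem eval_dickson_sum_pow_two_pow_sq_mul_inv_eq_inv [Fintype K] [CharP K 2] {k d : ℕ}
    (hd : d * (2 ^ k - 1) ≡ 1 [MOD Fintype.card K ^ 2 - 1]) (t : K) :
    (dickson 1 (1 : K) d).eval ((∑ i ∈ range k, t ^ 2 ^ i) ^ 2 * (t ^ (2 ^ k + 1))⁻¹) = t⁻¹ := by
  obtain rfl | ht := eq_or_ne t 0
  · simp [dickson_one_one_eval_zero]
  let φ := algebraMap K (AlgebraicClosure K)
  obtain ⟨s, hs, hst⟩ := exists_add_inv_eq (φ t⁻¹)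
  have hts : φ t * (s + s⁻¹) = 1 := by rw [hst, ← map_mul, mul_inv_cancel₀ ht, map_one]
  have hs_pow : s ^ (Fintype.card K ^ 2 - 1) = 1 := by
    refine mul_left_cancel₀ hs ?_
    rw [mul_pow_sub_one (by positivity), pow_card_sq_eq_self t⁻¹ hs hst, mul_one]
  have hvd : (s ^ (2 ^ k - 1)) ^ d = s := by
    rw [← pow_mul, mul_comm, pow_eq_pow_of_modEq hd hs_pow, pow_one]
  apply φ.injective
  calc φ ((dickson 1 (1 : K) d).eval ((∑ i ∈ range k, t ^ 2 ^ i) ^ 2 * (t ^ (2 ^ k + 1))⁻¹))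
      = (dickson 1 (1 : AlgebraicClosure K) d).eval
          ((∑ i ∈ range k, φ t ^ 2 ^ i) ^ 2 * (φ t ^ (2 ^ k + 1))⁻¹) := by
        rw [← eval_map_apply, map_dickson, map_one]
        simp only [map_mul, map_pow, map_sum, map_inv₀]
    _ = s + s⁻¹ := by
        rw [sum_pow_two_pow_sq_mul_inv_eq_add_inv hts,
          dickson_one_one_eval_add_inv _ _ (mul_inv_cancel₀ (pow_ne_zero _ hs)), inv_pow, hvd]
    _ = φ t⁻¹ := hst

def dempwolffMullerMul (m k : ℕ) (a x : K) : K :=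
  a ^ (2 ^ (m - 1) - 2 ^ (k - 1) - 1) * ∑ i ∈ range k, (a * x) ^ 2 ^ i

theorem dempwolffMullerMul_sq_mul_inv [Fintype K] {m k : ℕ} (hK : Fintype.card K = 2 ^ m)
    (hk : 0 < k) (hkm : k < m) (a x : K) :
    dempwolffMullerMul m k a x ^ 2 * (x ^ (2 ^ k + 1))⁻¹ =
      (∑ i ∈ range k, (a * x) ^ 2 ^ i) ^ 2 * ((a * x) ^ (2 ^ k + 1))⁻¹ := by
  obtain rfl | ha := eq_or_ne a 0
  · simp [dempwolffMullerMul]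
  have hexp : 2 * (2 ^ (m - 1) - 2 ^ (k - 1) - 1) + (2 ^ k + 1) = Fintype.card K - 1 := by
    have hk' : 2 ^ k = 2 * 2 ^ (k - 1) := by rw [← pow_succ']; congr 1; omega
    have hm' : 2 ^ m = 2 * 2 ^ (m - 1) := by rw [← pow_succ']; congr 1; omega
    have := Nat.pow_lt_pow_right (by norm_num : 1 < 2) (by omega : k - 1 < m - 1)
    omega
  have ha_pow : a ^ (2 * (2 ^ (m - 1) - 2 ^ (k - 1) - 1)) = (a ^ (2 ^ k + 1))⁻¹ := by
    refine eq_inv_of_mul_eq_one_left ?_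
    rw [← pow_add, hexp, FiniteField.pow_card_sub_one_eq_one a ha]
  rw [dempwolffMullerMul, mul_pow, ← pow_mul, mul_comm _ 2, ha_pow, mul_pow a x, mul_inv]
  ring

theorem dempwolffMullerMul_leftInverse [Fintype K] [CharP K 2] {m k d : ℕ}
    (hK : Fintype.card K = 2 ^ m) (hk : 0 < k) (hkm : k < m)
    (hd : d * (2 ^ k - 1) ≡ 1 [MOD 2 ^ (2 * m) - 1]) {x : K} (hx : x ≠ 0) :
    Function.LeftInverse
      (fun y => (x * (dickson 1 (1 : K) d).eval (y ^ 2 * (x ^ (2 ^ k + 1))⁻¹))⁻¹)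
      (fun a => dempwolffMullerMul m k a x) := fun a => by
  have hd' : d * (2 ^ k - 1) ≡ 1 [MOD Fintype.card K ^ 2 - 1] := by
    rwa [hK, ← pow_mul, mul_comm]
  simp only
  rw [dempwolffMullerMul_sq_mul_inv hK hk hkm, eval_dickson_sum_pow_two_pow_sq_mul_inv_eq_inv hd',
    mul_inv, inv_inv, mul_comm a, inv_mul_cancel_left₀ hx]

end DempwolffMuller

theorem stmt1_general (m k : ℕ) (hkpos : 0 < k)
    (hkm : k < m)
    (d : ℕ) (hd : d * (2 ^ k - 1) ≡ 1 [MOD 2 ^ (2 * m) - 1])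
    (dia : GaloisField 2 m → GaloisField 2 m → GaloisField 2 m)
    (hdia : ∀ a x, dia a x =
      a ^ (2 ^ (m - 1) - 2 ^ (k - 1) - 1) * ∑ i ∈ Finset.range k, (a * x) ^ (2 ^ i)) :
    ∀ x : GaloisField 2 m, x ≠ 0 →
      Function.Bijective (fun a => dia a x) ∧
      (∀ y, dia ((x * dicksonEval d (y ^ 2 * (x ^ (2 ^ k + 1))⁻¹))⁻¹) x = y) ∧
      (∀ a, (x * dicksonEval d ((dia a x) ^ 2 * (x ^ (2 ^ k + 1))⁻¹))⁻¹ = a) := by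
  intro x hx
  obtain rfl : dia = dempwolffMullerMul m k := funext₂ hdia
  have hdickson : ∀ z : GaloisField 2 m, dicksonEval d z = (dickson 1 1 d).eval z :=
    dicksonSum_eq_eval_dickson d
  let _ : Fintype (GaloisField 2 m) := Fintype.ofFinite _
  have hK : Fintype.card (GaloisField 2 m) = 2 ^ m := by
    rw [← Nat.card_eq_fintype_card, GaloisField.card 2 m (by omega)]
  have hinv := dempwolffMullerMul_leftInverse hK hkpos hkm hd hx
  simp only [← hdickson] at hinv
  have hbij := Finite.injective_iff_bijective.mp hinv.injective
  exact ⟨hbij, hinv.rightInverse_of_surjective hbij.2, hinv⟩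

theorem stmt1 (m k : ℕ) (hmpos : 0 < m) (hkpos : 0 < k) (hm : Odd m) (hk : Odd k)
    (hkm : k < m) (hgcd : Nat.gcd k m = 1)
    (d : ℕ) (hdpos : 0 < d) (hd : d * (2 ^ k - 1) ≡ 1 [MOD 2 ^ (2 * m) - 1])
    (dia : GaloisField 2 m → GaloisField 2 m → GaloisField 2 m)
    (hdia : ∀ a x, dia a x =
      a ^ (2 ^ (m - 1) - 2 ^ (k - 1) - 1) * ∑ i ∈ Finset.range k, (a * x) ^ (2 ^ i)) :
    ∀ x : GaloisField 2 m, x ≠ 0 →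
      Function.Bijective (fun a => dia a x) ∧
      (∀ y, dia ((x * dicksonEval d (y ^ 2 * (x ^ (2 ^ k + 1))⁻¹))⁻¹) x = y) ∧
      (∀ a, (x * dicksonEval d ((dia a x) ^ 2 * (x ^ (2 ^ k + 1))⁻¹))⁻¹ = a) :=
  stmt1_general m k hkpos hkm d hd dia hdia
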